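/- Let F be a field, m and E finite types, D a matrix over F with rows indexed by m and columns indexed by E; for S ⊆ E let r(S) be the rank of the submatrix of columns in S, and let T_D(X,Y) = Σ_{S ⊆ E} X^{r(E) − r(S)} · Y^{|S| − r(S)}. Suppose σ ∈ E is neither a loop nor a bridge of D, i.e., the column Dσ is nonzero and r(E ∖ {σ}) = r(E). Then T_D(X,Y) = T_{D/σ}(X,Y) + T_{D∖σ}(X,Y), where D∖σ is the deletion and D/σ the contraction of D by σ. -/

import Mathlib

open MvPolynomial

/-- The rank of the family of vectors `(v σ)_{σ ∈ S}`. -/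
noncomputable def famRank (F : Type*) [Field F] {N : Type*} [AddCommGroup N] [Module F N]
    {E : Type*} (v : E → N) (S : Finset E) : ℕ :=
  Module.finrank F (Submodule.span F (v '' (S : Set E)))

/-- The corank–nullity (Tutte–Krushkal–Renardy) polynomial of a family of vectors:
`T_v(X,Y) = Σ_{S ⊆ E} X^(r(E) − r(S)) · Y^(|S| − r(S))`. -/
noncomputable def famTutte (F : Type*) [Field F] {N : Type*} [AddCommGroup N] [Module F N]
    {E : Type*} [Fintype E] (v : E → N) : MvPolynomial (Fin 2) ℤ :=
  ∑ S : Finset E,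
    X 0 ^ (famRank F v Finset.univ - famRank F v S) * X 1 ^ (S.card - famRank F v S)

/-!
Split the subsets `S ⊆ E` according to whether `σ ∈ S`. Those avoiding `σ` are the subsets of
the deletion, with the same ranks, and the total rank is unchanged because `σ` is not a bridge.
For `S ∋ σ`, passing to the quotient by the line spanned by `Dσ ≠ 0` lowers the rank of the
span of `S` by exactly one, so in the contraction both `r(S)` and `|S|` drop by one and all
exponents are preserved.
-/

open Finset Module

theorem Finset.univ_map_subtype_ne {E : Type*} [Fintype E] [DecidableEq E] (σ : E) :
    (univ : Finset {x // x ≠ σ}).map (Function.Embedding.subtype _) = univ.erase σ := by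
  rw [univ_map_subtype, filter_ne' univ σ]

theorem Finset.powerset_map {α β : Type*} (f : α ↪ β) (s : Finset α) :
    (s.map f).powerset = s.powerset.map (mapEmbedding f).toEmbedding := by
  ext t
  simp [subset_map_iff, eq_comm]

theorem Finset.sum_univ_eq_sum_map_subtype_ne_add {E M : Type*} [Fintype E] [DecidableEq E]
    [AddCommMonoid M] (σ : E) (f : Finset E → M) :
    ∑ S : Finset E, f S
      = ∑ S : Finset {x // x ≠ σ}, f (S.map (Function.Embedding.subtype _))
        + ∑ S : Finset {x // x ≠ σ}, f (insert σ (S.map (Function.Embedding.subtype _))) := by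
  rw [← powerset_univ, ← insert_erase (mem_univ σ), sum_powerset_insert (notMem_erase σ _),
    ← univ_map_subtype_ne, powerset_map, sum_map, sum_map, powerset_univ]
  rfl

theorem Submodule.finrank_map_mkQ_add_finrank {F N : Type*} [Field F] [AddCommGroup N]
    [Module F N] {W p : Submodule F N} [FiniteDimensional F p] (hWp : W ≤ p) :
    finrank F (p.map W.mkQ) + finrank F W = finrank F p := by
  have h := LinearMap.finrank_range_add_finrank_ker (W.mkQ.comp p.subtype)
  rwa [LinearMap.range_comp, Submodule.range_subtype, LinearMap.ker_comp, Submodule.ker_mkQ,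
    (Submodule.comapSubtypeEquivOfLe hWp).finrank_eq] at h

section famRank

variable {F N E : Type*} [Field F] [AddCommGroup N] [Module F N]

theorem famRank_comp_subtype_val (v : E → N) (p : E → Prop) (S : Finset {x // p x}) :
    famRank F (fun τ : {x // p x} => v τ) S
      = famRank F v (S.map (Function.Embedding.subtype p)) := by
  rw [famRank, famRank, coe_map, ← Set.image_comp]
  rfl

theorem famRank_mkQ_add_one [DecidableEq E] (v : E → N) {σ : E} (hσ : v σ ≠ 0)
    (S : Finset {x // x ≠ σ}) :
    famRank F (fun τ : {x // x ≠ σ} => (Submodule.span F {v σ}).mkQ (v τ)) S + 1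
      = famRank F v (insert σ (S.map (Function.Embedding.subtype _))) := by
  set W := Submodule.span F {v σ}
  set T := insert σ (S.map (Function.Embedding.subtype _))
  have : FiniteDimensional F (Submodule.span F (v '' T)) :=
    FiniteDimensional.span_of_finite F (T.finite_toSet.image v)
  have hspan : Submodule.span F ((fun τ : {x // x ≠ σ} => W.mkQ (v τ)) '' S)
      = (Submodule.span F (v '' T)).map W.mkQ := by
    rw [Submodule.map_span, coe_insert, coe_map, Set.image_insert_eq, Set.image_insert_eq,
      ← Set.image_comp, ← Set.image_comp, Submodule.mkQ_apply,
      (Submodule.Quotient.mk_eq_zero W).2 (Submodule.mem_span_singleton_self _),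
      Submodule.span_insert_zero]
    rfl
  have hWT : W ≤ Submodule.span F (v '' T) :=
    (Submodule.span_singleton_le_iff_mem _ _).2
      (Submodule.subset_span ⟨σ, mem_insert_self _ _, rfl⟩)
  rw [famRank, hspan, ← finrank_span_singleton (K := F) hσ]
  exact Submodule.finrank_map_mkQ_add_finrank hWT

end famRank

theorem statement8_general {F : Type*} [Field F] {m E : Type*} [Fintype E]
    [DecidableEq E] (D : Matrix m E F) (σ : E)
    (hnotloop : (fun i => D i σ) ≠ (0 : m → F))
    (hnotbridge : famRank F (fun τ i => D i τ) (Finset.univ.erase σ)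
      = famRank F (fun τ i => D i τ) (Finset.univ : Finset E)) :
    famTutte F (fun τ i => D i τ)
      = famTutte F (fun τ : {x : E // x ≠ σ} =>
          (Submodule.span F {fun i => D i σ}).mkQ (fun i => D i (τ : E)))
        + famTutte F (fun (τ : {x : E // x ≠ σ}) (i : m) => D i (τ : E)) := by
  set v : E → m → F := fun τ i => D i τ
  have hcontr := famRank_mkQ_add_one (F := F) v hnotloop
  have hdel := famRank_comp_subtype_val (F := F) v (· ≠ σ)
  have hcontr_univ := hcontr univ
  rw [univ_map_subtype_ne, insert_erase (mem_univ σ)] at hcontr_univ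
  rw [famTutte, sum_univ_eq_sum_map_subtype_ne_add σ, add_comm, famTutte, famTutte]
  congr 1 <;> refine sum_congr rfl fun S _ => ?_
  · rw [card_insert_of_notMem (notMem_map_subtype_of_not_property S (not_not.2 rfl)), card_map,
      ← hcontr S, ← hcontr_univ, Nat.add_sub_add_right, Nat.add_sub_add_right]
  · rw [hdel, hdel, univ_map_subtype_ne, hnotbridge, card_map]

/-- if `σ ∈ E` is neither a loop (its column `Dσ` is nonzero) nor a bridge
(`r(E ∖ {σ}) = r(E)`), then `T_D(X,Y) = T_{D/σ}(X,Y) + T_{D∖σ}(X,Y)`, where `D∖σ` is the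
deletion (columns `E ∖ {σ}` of `D`) and `D/σ` the contraction (columns `E ∖ {σ}` composed
with the quotient map `F^m → F^m / span(Dσ)`). -/
theorem statement8 {F : Type*} [Field F] {m E : Type*} [Fintype m] [Fintype E]
    [DecidableEq E] (D : Matrix m E F) (σ : E)
    (hnotloop : (fun i => D i σ) ≠ (0 : m → F))
    (hnotbridge : famRank F (fun τ i => D i τ) (Finset.univ.erase σ)
      = famRank F (fun τ i => D i τ) (Finset.univ : Finset E)) :
    famTutte F (fun τ i => D i τ)
      = famTutte F (fun τ : {x : E // x ≠ σ} =>
          (Submodule.span F {fun i => D i σ}).mkQ (fun i => D i (τ : E)))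
        + famTutte F (fun (τ : {x : E // x ≠ σ}) (i : m) => D i (τ : E)) :=
  statement8_general D σ hnotloop hnotbridge
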